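/- For i = 0,…,⌊n/2⌋, k, ℓ = 0,…,n and u ∈ U_i, the identity W̄_{k,ℓ} W_{ℓ,i} u = (−1)^i q^{binom(i,2)+k(ℓ−i)} [n−k−i choose ℓ−i]_q · W_{k,i} u holds, where binom(i,2) = i(i−1)/2. -/

import Mathlib

open Matrix

/-- The Gaussian binomial coefficient `[a choose b]_q`, as a real number:
`∏_{i=0}^{b-1} (q^(a-i)-1)/(q^(b-i)-1)` for `a, b ≥ 0`, and `0` if `a < 0` or `b < 0`. -/
noncomputable def gbinom (q : ℝ) (a b : ℤ) : ℝ :=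
  if 0 ≤ a ∧ 0 ≤ b then
    ∏ i ∈ Finset.range b.toNat, (q ^ (a - i) - 1) / (q ^ (b - i) - 1)
  else 0

/-- The matrix `W_{k,ℓ}` on `L(V) × L(V)`: `(W_{k,ℓ})_{x,y} = 1` if `dim x = k`, `dim y = ℓ`
and `dim (x ⊓ y) = min k ℓ`, and `0` otherwise.  (Indices in `ℤ`, so that `W_{-1,0} = 0`.) -/
noncomputable def Wmat (K V : Type*) [Field K] [AddCommGroup V] [Module K V] (k l : ℤ) :
    Matrix (Submodule K V) (Submodule K V) ℝ :=
  Matrix.of fun x y =>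
    if (Module.finrank K x : ℤ) = k ∧ (Module.finrank K y : ℤ) = l ∧
        (Module.finrank K ↥(x ⊓ y) : ℤ) = min k l then 1 else 0

open Classical in
/-- The matrix `W̄_{k,ℓ}`: `(W̄_{k,ℓ})_{x,y} = 1` if `dim x = k`, `dim y = ℓ` and `x ⊓ y = ⊥`,
and `0` otherwise. -/
noncomputable def Wbarmat (K V : Type*) [Field K] [AddCommGroup V] [Module K V] (k l : ℤ) :
    Matrix (Submodule K V) (Submodule K V) ℝ :=
  Matrix.of fun x y =>
    if (Module.finrank K x : ℤ) = k ∧ (Module.finrank K y : ℤ) = l ∧ x ⊓ y = ⊥ then 1 else 0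

/-- The subspace `U_i ⊆ ℝ^{L(V)}` of vectors supported on `L_i(V)` and killed by
`W_{i-1,i}`. -/
noncomputable def Usub (K V : Type*) [Field K] [AddCommGroup V] [Module K V]
    [Fintype (Submodule K V)] (i : ℕ) : Submodule ℝ (Submodule K V → ℝ) :=
  LinearMap.ker (Matrix.mulVecLin (Wmat K V ((i : ℤ) - 1) (i : ℤ))) ⊓
    ⨅ x ∈ {x : Submodule K V | Module.finrank K x ≠ i},
      LinearMap.ker (LinearMap.proj (R := ℝ) (φ := fun _ : Submodule K V => ℝ) x)

/-
Write `q = |K|`. A vector `u ∈ U_i` satisfies `∑_{z ≥ w} u z = u w` for every subspace `w`: for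
`dim w < i` this follows from `W_{i-1,i} u = 0` by double counting through the `(i-1)`-spaces between
`w` and `z`, and for `dim w ≥ i` only `z = w` can contribute. Möbius inversion in the subspace lattice,
`∑_{w ≤ y} (-1)^{dim w} q^{C(dim w, 2)} = [y = 0]`, then turns the sum of `u` over the `i`-spaces
meeting `x` trivially into `(-1)^i q^{C(i,2)}` times its sum over the `i`-spaces inside `x`.
Finally `(W̄_{k,ℓ} W_{ℓ,i} u)(x)` weights each such `z` by the number of `ℓ`-spaces `y ≥ z` with
`x ∩ y = 0`, which is `q^{k(ℓ-i)} [n-k-i choose ℓ-i]_q` by induction on `ℓ - i`.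
-/

open Finset Module Submodule

section GaussianBinomial

variable {q : ℝ}

lemma gbinom_of_neg_right {a b : ℤ} (hb : b < 0) : gbinom q a b = 0 := by
  rw [gbinom, if_neg (by omega)]

lemma gbinom_zero_right {a : ℤ} (ha : 0 ≤ a) : gbinom q a 0 = 1 := by
  simp [gbinom, ha]

lemma gbinom_natCast_of_lt {a b : ℕ} (h : a < b) : gbinom q a b = 0 := by
  rw [gbinom, if_pos (by omega), Int.toNat_natCast]
  exact prod_eq_zero (mem_range.2 h) (by simp)

lemma gbinom_pos (hq : 1 < q) {a b : ℤ} (hb : 0 ≤ b) (hba : b ≤ a) : 0 < gbinom q a b := by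
  rw [gbinom, if_pos ⟨by omega, hb⟩]
  refine prod_pos fun j hj => div_pos ?_ ?_ <;>
  · rw [mem_range] at hj
    exact sub_pos.2 (one_lt_zpow₀ hq (by omega))

lemma gbinom_eq_prod_div {a : ℤ} (ha : 0 ≤ a) (b : ℕ) :
    gbinom q a b = (∏ j ∈ range b, (q ^ (a - j) - 1)) / ∏ j ∈ range b, (q ^ (j + 1) - 1) := by
  rw [gbinom, if_pos ⟨ha, by omega⟩, Int.toNat_natCast, prod_div_distrib,
    ← prod_range_reflect (fun j => q ^ (j + 1) - 1) b]
  congr 1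
  refine prod_congr rfl fun j hj => ?_
  rw [mem_range] at hj
  rw [← zpow_natCast]
  congr 2
  omega

lemma pow_succ_sub_one_ne_zero (hq : 1 < q) (j : ℕ) : q ^ (j + 1) - 1 ≠ 0 :=
  (sub_pos.2 (one_lt_pow₀ hq j.succ_ne_zero)).ne'

lemma gbinom_succ_right_mul (hq : 1 < q) (a : ℤ) (b : ℕ) :
    gbinom q a (b + 1) * (q ^ (b + 1) - 1) = gbinom q a b * (q ^ (a - b) - 1) := by
  rcases lt_or_ge a 0 with ha | ha
  · simp [gbinom, ha.not_ge]
  have hden := prod_ne_zero_iff.2 fun j (_ : j ∈ range b) => pow_succ_sub_one_ne_zero hq j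
  have hb := pow_succ_sub_one_ne_zero hq b
  rw [← Nat.cast_succ, gbinom_eq_prod_div ha, gbinom_eq_prod_div ha, prod_range_succ,
    prod_range_succ]
  field_simp

lemma gbinom_succ_succ_mul (hq : 1 < q) {a : ℤ} (ha : 0 ≤ a) (b : ℕ) :
    gbinom q (a + 1) (b + 1) * (q ^ (b + 1) - 1) = (q ^ (a + 1) - 1) * gbinom q a b := by
  have hden := prod_ne_zero_iff.2 fun j (_ : j ∈ range b) => pow_succ_sub_one_ne_zero hq j
  have hb := pow_succ_sub_one_ne_zero hq b
  rw [← Nat.cast_succ, gbinom_eq_prod_div (by omega), gbinom_eq_prod_div ha, prod_range_succ',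
    prod_range_succ]
  push_cast
  simp only [add_sub_add_right_eq_sub, sub_zero]
  field_simp

lemma gbinom_self (hq : 1 < q) (b : ℕ) : gbinom q b b = 1 := by
  rw [gbinom, if_pos (by omega), Int.toNat_natCast]
  refine prod_eq_one fun j hj => div_self (sub_pos.2 (one_lt_zpow₀ hq ?_)).ne'
  rw [mem_range] at hj
  omega

lemma gbinom_pascal (hq : 1 < q) (t s : ℕ) :
    gbinom q (t + 1) (s + 1) = q ^ (s + 1) * gbinom q t (s + 1) + gbinom q t s := by
  have habs := gbinom_succ_succ_mul hq (Int.natCast_nonneg t) s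
  have hsucc := gbinom_succ_right_mul hq t s
  have hpow : q ^ (s + 1) * q ^ ((t : ℤ) - s) = q ^ ((t : ℤ) + 1) := by
    rw [← zpow_natCast, ← zpow_add₀ (by positivity)]
    congr 1
    push_cast
    ring
  apply mul_right_cancel₀ (pow_succ_sub_one_ne_zero hq s)
  rw [habs]
  linear_combination -(q ^ (s + 1) * hsucc) - gbinom q t s * hpow

lemma gbinom_succ_self_mul (hq : 1 < q) (m : ℕ) :
    gbinom q (m + 1) m * (q - 1) = q ^ (m + 1) - 1 := by
  have hself : gbinom q (m + 1 : ℕ) (m + 1 : ℕ) = 1 := gbinom_self hq (m + 1)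
  push_cast at hself
  simpa [hself] using (gbinom_succ_right_mul hq (m + 1) m).symm

/-- `μ(0, w)` for the Möbius function `μ` of the lattice of subspaces, where `dim w = d`. -/
def subspaceMoebius (q : ℝ) (d : ℕ) : ℝ := (-1) ^ d * q ^ d.choose 2

lemma sum_range_subspaceMoebius_mul_gbinom (hq : 1 < q) (t : ℕ) :
    ∑ s ∈ range (t + 1), subspaceMoebius q s * gbinom q t s = if t = 0 then 1 else 0 := by
  cases t with
  | zero => simp [subspaceMoebius, gbinom_zero_right]
  | succ t =>
    let e : ℕ → ℝ := fun s => (-1) ^ s * q ^ (s + 1).choose 2 * gbinom q t s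
    have hterm (s : ℕ) :
        subspaceMoebius q (s + 1) * gbinom q ↑(t + 1) ↑(s + 1) = e (s + 1) - e s := by
      push_cast
      rw [gbinom_pascal hq, subspaceMoebius]
      simp only [e, Nat.choose_succ_succ' (s + 1) 1, Nat.choose_one_right, pow_add, Nat.cast_add,
        Nat.cast_one]
      ring
    have hlast : gbinom q t (t + 1 : ℕ) = 0 := gbinom_natCast_of_lt (lt_add_one t)
    push_cast at hlast
    rw [sum_range_succ', sum_congr rfl fun s _ => hterm s, sum_range_sub]
    simp [e, subspaceMoebius, hlast, gbinom_zero_right (Int.natCast_nonneg t),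
      gbinom_zero_right (by positivity : (0 : ℤ) ≤ t + 1)]

end GaussianBinomial

section Counting

open scoped Classical

variable {K V : Type*} [Field K] [AddCommGroup V] [Module K V]

local notation "q" => (Fintype.card K : ℝ)

lemma finrank_sup_of_disjoint [FiniteDimensional K V] {x z : Submodule K V} (h : Disjoint x z) :
    finrank K ↥(x ⊔ z) = finrank K x + finrank K z := by
  have := finrank_sup_add_finrank_inf_eq x z
  rwa [h.eq_bot, finrank_bot, add_zero] at this

lemma card_mem_and_notMem [Fintype K] [Fintype V] {A B : Submodule K V} (hBA : B ≤ A) :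
    (#{v : V | v ∈ A ∧ v ∉ B} : ℝ) = q ^ finrank K A - q ^ finrank K B := by
  have hcard (C : Submodule K V) : #{v : V | v ∈ C} = Fintype.card K ^ finrank K C := by
    rw [← Fintype.card_subtype, card_eq_pow_finrank (K := K) (V := C)]
  have hsub : ({v : V | v ∈ B} : Finset V) ⊆ ({v : V | v ∈ A} : Finset V) := by
    intro v
    simpa using @hBA v
  rw [filter_and_not, card_sdiff_of_subset hsub, Nat.cast_sub (card_le_card hsub), hcard, hcard]
  push_cast
  rfl

variable [Fintype (Submodule K V)]

noncomputable def disjointExtensions (x z A : Submodule K V) (d : ℕ) : Finset (Submodule K V) :=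
  {y | z ≤ y ∧ y ≤ A ∧ Disjoint x y ∧ finrank K y = d}

@[simp]
lemma mem_disjointExtensions {x z A y : Submodule K V} {d : ℕ} :
    y ∈ disjointExtensions x z A d ↔ z ≤ y ∧ y ≤ A ∧ Disjoint x y ∧ finrank K y = d := by
  simp [disjointExtensions]

lemma disjointExtensions_eq_empty {x z A : Submodule K V} (h : ¬ (z ≤ A ∧ Disjoint x z)) (d : ℕ) :
    disjointExtensions x z A d = ∅ := by
  refine eq_empty_of_forall_notMem fun y hy => h ?_
  obtain ⟨hzy, hyA, hxy, -⟩ := mem_disjointExtensions.1 hy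
  exact ⟨hzy.trans hyA, hxy.mono_right hzy⟩

variable [Fintype K] [FiniteDimensional K V]

lemma one_lt_card_real : 1 < q := by exact_mod_cast Fintype.one_lt_card

/-- `v ↦ w ⊔ K ∙ v` maps the vectors of `A` outside `x ⊔ w` onto these extensions, with fibre
`y \ w` over `y`. -/
lemma card_disjointExtensions_succ_mul {x w A : Submodule K V} (hxA : x ≤ A) (hwA : w ≤ A)
    (hxw : Disjoint x w) :
    (#(disjointExtensions x w A (finrank K w + 1)) : ℝ) * (q ^ (finrank K w + 1) - q ^ finrank K w)
      = q ^ finrank K A - q ^ (finrank K x + finrank K w) := by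
  have : Finite V := Module.finite_of_finite K
  have := Fintype.ofFinite V
  set T := disjointExtensions x w A (finrank K w + 1)
  set D : Finset V := {v | v ∈ A ∧ v ∉ x ⊔ w} with hD
  have hmaps : ∀ v ∈ D, w ⊔ K ∙ v ∈ T := by
    intro v hv
    simp only [D, mem_filter, mem_univ, true_and] at hv
    have hvw : v ∉ w := fun h => hv.2 (mem_sup_right h)
    rw [mem_disjointExtensions]
    exact ⟨le_sup_left, sup_le hwA ((span_singleton_le_iff_mem v A).2 hv.1),
      hxw.disjoint_sup_right_of_disjoint_sup_left (disjoint_span_singleton_of_notMem hv.2),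
      finrank_sup_span_singleton hvw⟩
  have hfiber : ∀ y ∈ T, {v ∈ D | w ⊔ K ∙ v = y} = ({v | v ∈ y ∧ v ∉ w} : Finset V) := by
    intro y hy
    obtain ⟨hwy, hyA, hxy, hdim⟩ := mem_disjointExtensions.1 hy
    have hmod : (w ⊔ x) ⊓ y = w := by rw [sup_inf_assoc_of_le x hwy, hxy.eq_bot, sup_bot_eq]
    ext v
    simp only [D, mem_filter, mem_univ, true_and]
    constructor
    · rintro ⟨⟨-, hv⟩, rfl⟩
      exact ⟨mem_sup_right (mem_span_singleton_self v), fun h => hv (mem_sup_right h)⟩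
    · rintro ⟨hvy, hvw⟩
      have hspan : w ⊔ K ∙ v ≤ y := sup_le hwy ((span_singleton_le_iff_mem v y).2 hvy)
      refine ⟨⟨hyA hvy, fun h => hvw ?_⟩, ?_⟩
      · rw [← hmod]
        exact mem_inf.2 ⟨by rwa [sup_comm], hvy⟩
      · exact eq_of_le_of_finrank_eq hspan (by rw [finrank_sup_span_singleton hvw, hdim])
  have hcardD : (#D : ℝ) = q ^ finrank K A - q ^ (finrank K x + finrank K w) := by
    rw [hD, card_mem_and_notMem (sup_le hxA hwA), finrank_sup_of_disjoint hxw]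
  rw [← hcardD, card_eq_sum_card_fiberwise hmaps, Nat.cast_sum, sum_congr rfl fun y hy => by
    rw [hfiber y hy, card_mem_and_notMem (mem_disjointExtensions.1 hy).1,
      (mem_disjointExtensions.1 hy).2.2.2], sum_const, nsmul_eq_mul]

lemma card_disjointExtensions_add (m : ℕ) {x z A : Submodule K V} (hxA : x ≤ A) (hzA : z ≤ A)
    (hxz : Disjoint x z) :
    (#(disjointExtensions x z A (finrank K z + m)) : ℝ)
      = q ^ (finrank K x * m) * gbinom q ((finrank K A : ℤ) - finrank K x - finrank K z) m := by
  have hq : 1 < q := one_lt_card_real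
  induction m generalizing x z A with
  | zero =>
    have hdim : finrank K x + finrank K z ≤ finrank K A :=
      finrank_sup_of_disjoint hxz ▸ finrank_mono (sup_le hxA hzA)
    have hsingle : disjointExtensions x z A (finrank K z) = {z} := by
      ext y
      simp only [mem_disjointExtensions, mem_singleton]
      constructor
      · rintro ⟨hzy, -, -, hy⟩
        exact (eq_of_le_of_finrank_eq hzy hy.symm).symm
      · rintro rfl
        exact ⟨le_rfl, hzA, hxz, rfl⟩
    simp [hsingle, gbinom_zero_right (a := finrank K A - finrank K x - finrank K z) (by omega)]
  | succ m ih =>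
    set E := fun m => disjointExtensions x z A (finrank K z + m)
    have hhyper : ∀ y ∈ E (m + 1), (#{y' ∈ E m | y' ≤ y} : ℝ) = gbinom q (m + 1) m := by
      intro y hy
      obtain ⟨hzy, hyA, hxy, hdy⟩ := mem_disjointExtensions.1 hy
      have : {y' ∈ E m | y' ≤ y} = disjointExtensions ⊥ z y (finrank K z + m) := by
        ext y'
        simp only [E, mem_filter, mem_disjointExtensions, disjoint_bot_left, true_and]
        exact ⟨fun ⟨⟨h1, _, _, h4⟩, h5⟩ => ⟨h1, h5, h4⟩,
          fun ⟨h1, h5, h4⟩ => ⟨⟨h1, h5.trans hyA, hxy.mono_right h5, h4⟩, h5⟩⟩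
      rw [this, ih bot_le hzy disjoint_bot_left, hdy]
      simp
    have hext : ∀ y' ∈ E m, (#{y ∈ E (m + 1) | y' ≤ y} : ℝ) *
        (q ^ (finrank K z + m + 1) - q ^ (finrank K z + m))
          = q ^ finrank K A - q ^ (finrank K x + (finrank K z + m)) := by
      intro y' hy'
      obtain ⟨hzy', hy'A, hxy', hdy'⟩ := mem_disjointExtensions.1 hy'
      have : {y ∈ E (m + 1) | y' ≤ y} = disjointExtensions x y' A (finrank K y' + 1) := by
        ext y
        simp only [E, mem_filter, mem_disjointExtensions, hdy', ← add_assoc]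
        exact ⟨fun ⟨⟨_, h2, h3, h4⟩, h5⟩ => ⟨h5, h2, h3, h4⟩,
          fun ⟨h5, h2, h3, h4⟩ => ⟨⟨hzy'.trans h5, h2, h3, h4⟩, h5⟩⟩
      rw [this, ← hdy']
      exact card_disjointExtensions_succ_mul hxA hy'A hxy'
    -- double count the pairs `y' ≤ y` with `y' ∈ E m` and `y ∈ E (m + 1)`
    have hpairs : (#(E (m + 1)) : ℝ) * gbinom q (m + 1) m *
        (q ^ (finrank K z + m + 1) - q ^ (finrank K z + m))
          = #(E m) * (q ^ finrank K A - q ^ (finrank K x + (finrank K z + m))) := by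
      have hdouble : ∑ y ∈ E (m + 1), (#{y' ∈ E m | y' ≤ y} : ℝ)
          = ∑ y' ∈ E m, (#{y ∈ E (m + 1) | y' ≤ y} : ℝ) := by
        exact_mod_cast
          sum_card_bipartiteAbove_eq_sum_card_bipartiteBelow (r := fun y y' => y' ≤ y)
      calc _ = (∑ y ∈ E (m + 1), (#{y' ∈ E m | y' ≤ y} : ℝ)) *
            (q ^ (finrank K z + m + 1) - q ^ (finrank K z + m)) := by
            rw [sum_congr rfl hhyper, sum_const, nsmul_eq_mul]
        _ = _ := by rw [hdouble, sum_mul, sum_congr rfl hext, sum_const, nsmul_eq_mul]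
    set a' : ℤ := (finrank K A : ℤ) - finrank K x - finrank K z
    have hG1 := gbinom_succ_self_mul hq m
    have hG2 := gbinom_succ_right_mul hq a' m
    have hpow : q ^ (finrank K x + (finrank K z + m)) * q ^ (a' - m) = q ^ finrank K A := by
      rw [← zpow_natCast, ← zpow_add₀ (by positivity), ← zpow_natCast]
      congr 1
      push_cast [a']
      ring
    have hX : gbinom q (m + 1) m * (q ^ (finrank K z + m + 1) - q ^ (finrank K z + m)) ≠ 0 :=
      mul_ne_zero (gbinom_pos hq (by positivity) (by omega)).ne'
        (sub_pos.2 (pow_lt_pow_right₀ hq (by omega))).ne'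
    rw [ih hxA hzA hxz] at hpairs
    push_cast
    apply mul_right_cancel₀ hX
    rw [← mul_assoc, hpairs]
    linear_combination -(q ^ (finrank K x * m) * gbinom q a' m) * hpow
      - q ^ (finrank K x * (m + 1) + finrank K z + m) * hG2
      - q ^ (finrank K x * (m + 1) + finrank K z + m) * gbinom q a' (m + 1) * hG1

lemma card_disjointExtensions {x z A : Submodule K V} (hxA : x ≤ A) (hzA : z ≤ A)
    (hxz : Disjoint x z) (d : ℕ) :
    (#(disjointExtensions x z A d) : ℝ) = q ^ ((finrank K x : ℤ) * (d - finrank K z)) *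
      gbinom q ((finrank K A : ℤ) - finrank K x - finrank K z) (d - finrank K z) := by
  rcases le_or_gt (finrank K z) d with hzd | hdz
  · obtain ⟨m, rfl⟩ := Nat.exists_eq_add_of_le hzd
    rw [card_disjointExtensions_add m hxA hzA hxz]
    push_cast
    simp [← zpow_natCast]
  · rw [gbinom_of_neg_right (by omega), mul_zero, Nat.cast_eq_zero, card_eq_zero]
    refine eq_empty_of_forall_notMem fun y hy => ?_
    obtain ⟨hzy, -, -, rfl⟩ := mem_disjointExtensions.1 hy
    exact (finrank_mono hzy).not_gt hdz

lemma card_disjointExtensions_top (x z : Submodule K V) (d : ℕ) :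
    (#(disjointExtensions x z ⊤ d) : ℝ) = if Disjoint x z then
      q ^ ((finrank K x : ℤ) * (d - finrank K z)) *
        gbinom q ((finrank K V : ℤ) - finrank K x - finrank K z) (d - finrank K z) else 0 := by
  split_ifs with hxz
  · rw [card_disjointExtensions le_top le_top hxz, finrank_top]
  · simp [disjointExtensions_eq_empty (A := ⊤) (by simpa using hxz)]

end Counting

lemma sum_sum_filter_eq_sum_card_mul {α β : Type*} [Fintype β] (s : Finset α) (R : α → β → Prop)
    [∀ a b, Decidable (R a b)] (f : β → ℝ) :
    ∑ a ∈ s, ∑ b with R a b, f b = ∑ b, (#{a ∈ s | R a b} : ℝ) * f b := by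
  have := sum_sum_bipartiteAbove_eq_sum_sum_bipartiteBelow (r := R) (s := s) (t := univ)
    (f := fun _ b => f b)
  simpa only [bipartiteAbove, bipartiteBelow, sum_const, nsmul_eq_mul] using this

section SubspaceVectors

open scoped Classical

variable {K V : Type*} [Field K] [AddCommGroup V] [Module K V]

lemma finrank_inf_eq_finrank_right_iff [FiniteDimensional K V] {x z : Submodule K V} :
    finrank K ↥(x ⊓ z) = finrank K z ↔ z ≤ x :=
  ⟨fun h => inf_eq_right.1 (eq_of_le_of_finrank_eq inf_le_right h),
    fun h => by rw [inf_eq_right.2 h]⟩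

lemma finrank_inf_eq_finrank_left_iff [FiniteDimensional K V] {x z : Submodule K V} :
    finrank K ↥(x ⊓ z) = finrank K x ↔ x ≤ z :=
  ⟨fun h => inf_eq_left.1 (eq_of_le_of_finrank_eq inf_le_left h),
    fun h => by rw [inf_eq_left.2 h]⟩

variable [Fintype (Submodule K V)]

lemma Wmat_mulVec_apply (k l : ℕ) (g : Submodule K V → ℝ) (x : Submodule K V) :
    (Wmat K V k l *ᵥ g) x = if finrank K x = k then
      ∑ z with finrank K ↥(x ⊓ z) = min k l ∧ finrank K z = l, g z else 0 := by
  split_ifs with hx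
  · simp [mulVec, dotProduct, Wmat, sum_filter, hx, and_comm, ← Nat.cast_min]
  · simp [mulVec, dotProduct, Wmat, hx]

lemma Wbarmat_mulVec_apply (k l : ℕ) (g : Submodule K V → ℝ) (x : Submodule K V) :
    (Wbarmat K V k l *ᵥ g) x = if finrank K x = k then
      ∑ z with Disjoint x z ∧ finrank K z = l, g z else 0 := by
  split_ifs with hx
  · simp [mulVec, dotProduct, Wbarmat, sum_filter, hx, disjoint_iff, and_comm]
  · simp [mulVec, dotProduct, Wbarmat, hx]

variable {g : Submodule K V → ℝ} {l : ℕ}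

lemma sum_and_finrank_eq_of_support (hg : ∀ z : Submodule K V, finrank K z ≠ l → g z = 0)
    (P : Submodule K V → Prop) :
    ∑ z with P z ∧ finrank K z = l, g z = ∑ z with P z, g z := by
  rw [sum_filter, sum_filter]
  refine sum_congr rfl fun z _ => ?_
  by_cases hz : finrank K z = l <;> simp [hz, hg]

variable [FiniteDimensional K V]

lemma Wmat_mulVec_apply_of_le (hg : ∀ z : Submodule K V, finrank K z ≠ l → g z = 0) {k : ℕ}
    (hlk : l ≤ k) {x : Submodule K V} (hx : finrank K x = k) :
    (Wmat K V k l *ᵥ g) x = ∑ z with z ≤ x, g z := by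
  rw [Wmat_mulVec_apply, if_pos hx, min_eq_right hlk, ← sum_and_finrank_eq_of_support hg]
  refine sum_congr (filter_congr fun z _ => ?_) fun _ _ => rfl
  constructor
  · rintro ⟨h, hz⟩
    exact ⟨finrank_inf_eq_finrank_right_iff.1 (h.trans hz.symm), hz⟩
  · rintro ⟨h, hz⟩
    exact ⟨(finrank_inf_eq_finrank_right_iff.2 h).trans hz, hz⟩

lemma Wmat_mulVec_apply_of_ge (hg : ∀ z : Submodule K V, finrank K z ≠ l → g z = 0) {k : ℕ}
    (hkl : k ≤ l) {x : Submodule K V} (hx : finrank K x = k) :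
    (Wmat K V k l *ᵥ g) x = ∑ z with x ≤ z, g z := by
  rw [Wmat_mulVec_apply, if_pos hx, min_eq_left hkl, ← sum_and_finrank_eq_of_support hg]
  refine sum_congr (filter_congr fun z _ => ?_) fun _ _ => rfl
  rw [← hx, finrank_inf_eq_finrank_left_iff]

end SubspaceVectors

section Usub

open scoped Classical

variable {K V : Type*} [Field K] [AddCommGroup V] [Module K V] [Fintype (Submodule K V)]
  {i : ℕ} {u : Submodule K V → ℝ}

lemma mem_Usub : u ∈ Usub K V i ↔
    Wmat K V ((i : ℤ) - 1) i *ᵥ u = 0 ∧ ∀ z : Submodule K V, finrank K z ≠ i → u z = 0 := by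
  simp [Usub, mem_iInf]

lemma sum_card_mul_eq_of_support (hu : ∀ z : Submodule K V, finrank K z ≠ i → u z = 0)
    {N : Submodule K V → ℕ} {P : Submodule K V → Prop} {c : ℝ}
    (hN : ∀ z : Submodule K V, finrank K z = i → (N z : ℝ) = if P z then c else 0) :
    ∑ z, (N z : ℝ) * u z = c * ∑ z with P z, u z := by
  rw [mul_sum, sum_filter]
  refine sum_congr rfl fun z _ => ?_
  by_cases hz : finrank K z = i
  · rw [hN z hz]
    split_ifs <;> simp
  · simp [hu z hz]

variable [Fintype K] [FiniteDimensional K V]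

local notation "q" => (Fintype.card K : ℝ)

lemma sum_ge_eq_zero_of_mem_Usub (hu : u ∈ Usub K V i) {w : Submodule K V}
    (hw : finrank K w < i) : ∑ z with w ≤ z, u z = 0 := by
  obtain ⟨hW, hsupp⟩ := mem_Usub.1 hu
  have hrow (y : Submodule K V) (hy : finrank K y = i - 1) : ∑ z with y ≤ z, u z = 0 := by
    have := congrFun hW y
    rwa [show (i : ℤ) - 1 = ((i - 1 : ℕ) : ℤ) by omega,
      Wmat_mulVec_apply_of_ge hsupp (Nat.sub_le i 1) hy] at this
  set c : ℝ := gbinom q ((i : ℤ) - finrank K w) ((i - 1 : ℕ) - finrank K w)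
  let S : Finset (Submodule K V) := {y | w ≤ y ∧ finrank K y = i - 1}
  have hcount (z : Submodule K V) (hz : finrank K z = i) :
      (#{y ∈ S | y ≤ z} : ℝ) = if w ≤ z then c else 0 := by
    have hext : {y ∈ S | y ≤ z} = disjointExtensions ⊥ w z (i - 1) := by
      ext y
      simp [S]
      tauto
    split_ifs with hwz
    · rw [hext, card_disjointExtensions bot_le hwz disjoint_bot_left]
      simp [c, hz]
    · rw [hext, disjointExtensions_eq_empty (by simpa using hwz)]
      simp
  have hc : c ≠ 0 := (gbinom_pos one_lt_card_real (by omega) (by omega)).ne'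
  have : c * ∑ z with w ≤ z, u z = 0 := by
    rw [← sum_card_mul_eq_of_support hsupp hcount, ← sum_sum_filter_eq_sum_card_mul]
    exact sum_eq_zero fun y hy => hrow y (mem_filter.1 hy).2.2
  exact (mul_eq_zero.1 this).resolve_left hc

lemma sum_ge_eq_of_mem_Usub (hu : u ∈ Usub K V i) (w : Submodule K V) :
    ∑ z with w ≤ z, u z = u w := by
  have hsupp := (mem_Usub.1 hu).2
  rcases lt_or_ge (finrank K w) i with hw | hw
  · rw [sum_ge_eq_zero_of_mem_Usub hu hw, hsupp w hw.ne]
  · refine sum_eq_single_of_mem w (by simp) fun z hz hzw => hsupp z ?_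
    have := finrank_lt_finrank_of_lt (lt_of_le_of_ne (mem_filter.1 hz).2 (Ne.symm hzw))
    omega

lemma Wmat_mulVec_apply_of_mem_Usub (hu : u ∈ Usub K V i) (k : ℕ) (x : Submodule K V) :
    (Wmat K V k i *ᵥ u) x = if finrank K x = k then ∑ z with z ≤ x, u z else 0 := by
  have hsupp := (mem_Usub.1 hu).2
  split_ifs with hx
  · rcases le_or_gt i k with hik | hki
    · exact Wmat_mulVec_apply_of_le hsupp hik hx
    · rw [Wmat_mulVec_apply_of_ge hsupp hki.le hx, sum_ge_eq_of_mem_Usub hu, hsupp x (by omega)]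
      refine (sum_eq_zero fun z hz => hsupp z ?_).symm
      have := finrank_mono (mem_filter.1 hz).2
      omega
  · rw [Wmat_mulVec_apply, if_neg hx]

lemma sum_subspaceMoebius_le (y : Submodule K V) :
    ∑ w with w ≤ y, subspaceMoebius q (finrank K w) = if y = ⊥ then 1 else 0 := by
  let T : Finset (Submodule K V) := {w | w ≤ y}
  have hmaps : ∀ w ∈ T, finrank K w ∈ range (finrank K y + 1) :=
    fun w hw => mem_range.2 (Nat.lt_succ_of_le (finrank_mono (mem_filter.1 hw).2))
  have hlayer (s : ℕ) :
      ∑ w ∈ T.filter (fun w : Submodule K V => finrank K w = s), subspaceMoebius q (finrank K w)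
        = subspaceMoebius q s * gbinom q (finrank K y) s := by
    have hext :
        T.filter (fun w : Submodule K V => finrank K w = s) = disjointExtensions ⊥ ⊥ y s := by
      ext w
      simp [T]
    rw [sum_congr rfl fun w hw => by rw [(mem_filter.1 hw).2], sum_const, nsmul_eq_mul, mul_comm,
      hext, card_disjointExtensions bot_le bot_le disjoint_bot_left]
    simp
  rw [← sum_fiberwise_of_maps_to hmaps, sum_congr rfl fun s _ => hlayer s,
    sum_range_subspaceMoebius_mul_gbinom one_lt_card_real]
  simp only [finrank_eq_zero]

lemma sum_disjoint_eq_of_mem_Usub (hu : u ∈ Usub K V i) (x : Submodule K V) :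
    ∑ z with Disjoint x z, u z = subspaceMoebius q i * ∑ z with z ≤ x, u z := by
  have hsupp := (mem_Usub.1 hu).2
  calc ∑ z with Disjoint x z, u z
      = ∑ z, (∑ w with w ≤ x ⊓ z, subspaceMoebius q (finrank K w)) * u z := by
        rw [sum_filter]
        refine sum_congr rfl fun z _ => ?_
        rw [sum_subspaceMoebius_le, disjoint_iff]
        split_ifs <;> simp
    _ = ∑ w with w ≤ x, subspaceMoebius q (finrank K w) * ∑ z with w ≤ z, u z := by
        simp only [sum_mul, mul_sum, le_inf_iff]
        exact sum_comm' fun z w => by simp [and_comm]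
    _ = ∑ w with w ≤ x, subspaceMoebius q i * u w := by
        refine sum_congr rfl fun w _ => ?_
        rw [sum_ge_eq_of_mem_Usub hu]
        by_cases hw : finrank K w = i
        · rw [hw]
        · simp [hsupp w hw]
    _ = subspaceMoebius q i * ∑ z with z ≤ x, u z := (mul_sum _ _ _).symm

end Usub

theorem Wbarmat_mulVec_Wmat_mulVec_general
    {K V : Type*} [Field K] [Fintype K] [AddCommGroup V] [Module K V] [FiniteDimensional K V]
    [Fintype (Submodule K V)]
    (n i k l : ℕ) (hV : Module.finrank K V = n)
    (u : Submodule K V → ℝ) (hu : u ∈ Usub K V i) :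
    (Wbarmat K V k l).mulVec ((Wmat K V l i).mulVec u) =
      ((-1 : ℝ) ^ i * (Fintype.card K : ℝ) ^ ((i.choose 2 : ℤ) + k * ((l : ℤ) - i)) *
        gbinom (Fintype.card K) ((n : ℤ) - k - i) ((l : ℤ) - i)) •
        (Wmat K V k i).mulVec u := by
  classical
  ext x
  rw [Pi.smul_apply, smul_eq_mul, Wbarmat_mulVec_apply, Wmat_mulVec_apply_of_mem_Usub hu]
  split_ifs with hx
  swap
  · simp
  set c : ℝ := (Fintype.card K : ℝ) ^ ((k : ℤ) * (l - i)) *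
    gbinom (Fintype.card K) ((n : ℤ) - k - i) ((l : ℤ) - i)
  let S : Finset (Submodule K V) := {y | Disjoint x y ∧ finrank K y = l}
  have hcount (z : Submodule K V) (hz : finrank K z = i) :
      (#{y ∈ S | z ≤ y} : ℝ) = if Disjoint x z then c else 0 := by
    have hext : {y ∈ S | z ≤ y} = disjointExtensions x z ⊤ l := by
      ext y
      simp [S]
      tauto
    rw [hext, card_disjointExtensions_top, hV, hx, hz]
  calc ∑ y ∈ S, (Wmat K V l i *ᵥ u) y
      = ∑ y ∈ S, ∑ z with z ≤ y, u z := sum_congr rfl fun y hy => by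
        rw [Wmat_mulVec_apply_of_mem_Usub hu, if_pos (mem_filter.1 hy).2.2]
    _ = c * ∑ z with Disjoint x z, u z := by
        rw [sum_sum_filter_eq_sum_card_mul, sum_card_mul_eq_of_support (mem_Usub.1 hu).2 hcount]
    _ = _ := by
        rw [sum_disjoint_eq_of_mem_Usub hu, subspaceMoebius, zpow_add₀ (by positivity),
          zpow_natCast]
        ring

/-- For `0 ≤ i ≤ ⌊n/2⌋`, `0 ≤ k, ℓ ≤ n` and `u ∈ U_i`:
`W̄_{k,ℓ} W_{ℓ,i} u = (-1)^i q^{C(i,2) + k(ℓ-i)} [n-k-i choose ℓ-i]_q W_{k,i} u`. -/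
theorem Wbarmat_mulVec_Wmat_mulVec
    {K V : Type*} [Field K] [Fintype K] [AddCommGroup V] [Module K V] [FiniteDimensional K V]
    [Fintype (Submodule K V)]
    (n i k l : ℕ) (hV : Module.finrank K V = n) (hi : i ≤ n / 2) (hk : k ≤ n) (hl : l ≤ n)
    (u : Submodule K V → ℝ) (hu : u ∈ Usub K V i) :
    (Wbarmat K V k l).mulVec ((Wmat K V l i).mulVec u) =
      ((-1 : ℝ) ^ i * (Fintype.card K : ℝ) ^ ((i.choose 2 : ℤ) + k * ((l : ℤ) - i)) *
        gbinom (Fintype.card K) ((n : ℤ) - k - i) ((l : ℤ) - i)) •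
        (Wmat K V k i).mulVec u :=
  Wbarmat_mulVec_Wmat_mulVec_general n i k l hV u hu
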